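/- Entanglement-distillation (fusion) protocol for the multipartite resource state: let n ≥ 1 and consider the (n+2)-qudit state |Max⟩ₙ ⊗ |Max⟩₂. Apply the controlled gate U₁ : e_{\vec k} ↦ e_{(k₁,…,k_{n-1}, kₙ + k_{n+1}, k_{n+1}, k_{n+2})} (X on wire n controlled by wire n+1), then F on wire n+1, then the inverse controlled gate U₃ : e_{\vec k} ↦ e_{(k₁,…,k_{n-1}, kₙ − k_{n+1}, k_{n+1}, k_{n+2})}. For every measurement outcome ℓ ∈ ZMod d, pairing wire n+1 against e_ℓ and then applying Y^{-ℓ} on the last wire yields exactly ζ^{ℓ²} · d^{-1/2} · |Max⟩_{n+1}. In particular, for every outcome ℓ the protocol produces the (n+1)-qudit resource state |Max⟩_{n+1} up to the phase ζ^{ℓ²}. -/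
import Mathlib


/-- The product basis vector `e_{\vec k}` of the `m`-qudit space. -/
noncomputable def ket (d m : ℕ) (k : Fin m → ZMod d) : (Fin m → ZMod d) → ℂ :=
  fun l => if l = k then 1 else 0

/-- The resource state `|Max⟩ₘ = d^{-(m-1)/2} ∑_{\vec ℓ : |\vec ℓ| = 0} e_{\vec ℓ}`. -/
noncomputable def MaxState (d : ℕ) [NeZero d] (m : ℕ) : (Fin m → ZMod d) → ℂ :=
  (Real.sqrt d : ℂ) ^ (1 - (m : ℤ)) •
    ∑ l ∈ Finset.univ.filter (fun l : Fin m → ZMod d => ∑ j, l j = 0), ket d m l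

/-- The qudit Pauli matrix `Y`, with `Y e_k = ζ^{1-2k} e_{k-1}`. -/
noncomputable def Ymat (d : ℕ) (ζ : ℂ) : Matrix (ZMod d) (ZMod d) ℂ :=
  Matrix.of fun j k => if j = k - 1 then ζ ^ (1 - 2 * (k.val : ℤ)) else 0

/-- The 1-qudit Fourier matrix `F`, with `F e_k = d^{-1/2} ∑_ℓ q^{kℓ} e_ℓ`. -/
noncomputable def Fmat (d : ℕ) (q : ℂ) : Matrix (ZMod d) (ZMod d) ℂ :=
  Matrix.of fun l k => (Real.sqrt d : ℂ)⁻¹ * q ^ (k.val * l.val)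

/-- The 1-qudit gate `A` applied to wire `j` of the `m`-qudit space (identity elsewhere). -/
noncomputable def onWire (d m : ℕ) (j : Fin m) (A : Matrix (ZMod d) (ZMod d) ℂ) :
    Matrix (Fin m → ZMod d) (Fin m → ZMod d) ℂ :=
  Matrix.of fun v w =>
    if Function.update v j 0 = Function.update w j 0 then A (v j) (w j) else 0

/-- The controlled gate `U₁ : e_{\vec k} ↦ e_{(k₁,…,k_{n-1}, kₙ + k_{n+1}, k_{n+1}, k_{n+2})}`
(X on wire `n` controlled by wire `n+1`, in 1-based numbering). -/
noncomputable def U1gate (d n : ℕ) (hn : 1 ≤ n) :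
    Matrix (Fin (n + 2) → ZMod d) (Fin (n + 2) → ZMod d) ℂ :=
  Matrix.of fun v w =>
    if v = Function.update w ⟨n - 1, by omega⟩
        (w ⟨n - 1, by omega⟩ + w ⟨n, by omega⟩) then 1 else 0

/-- The inverse controlled gate
`U₃ : e_{\vec k} ↦ e_{(k₁,…,k_{n-1}, kₙ − k_{n+1}, k_{n+1}, k_{n+2})}`. -/
noncomputable def U3gate (d n : ℕ) (hn : 1 ≤ n) :
    Matrix (Fin (n + 2) → ZMod d) (Fin (n + 2) → ZMod d) ℂ :=
  Matrix.of fun v w =>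
    if v = Function.update w ⟨n - 1, by omega⟩
        (w ⟨n - 1, by omega⟩ - w ⟨n, by omega⟩) then 1 else 0

set_option linter.unusedSectionVars false
set_option maxHeartbeats 1000000

/-- `1` if `x = 0`, else `0`. -/
noncomputable def qdlt (d : ℕ) (x : ZMod d) : ℂ := if x = 0 then 1 else 0

lemma pow_val_mod {d : ℕ} (q : ℂ) (hq : q ^ d = 1) (a : ℕ) : q ^ (a % d) = q ^ a := by
  conv_rhs => rw [← Nat.div_add_mod a d]
  rw [pow_add, pow_mul, hq, one_pow, one_mul]

lemma q_pow_eq_of_cast_eq {d : ℕ} (q : ℂ) (hqd : q ^ d = 1) {a b : ℕ}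
    (h : (a : ZMod d) = (b : ZMod d)) : q ^ a = q ^ b := by
  rw [← pow_val_mod q hqd a, ← pow_val_mod q hqd b, ← ZMod.val_natCast, ← ZMod.val_natCast, h]

/-- Auxiliary matrix: `(Ymat d ζ)⁻¹ ^ r`. -/
noncomputable def Zmat (d : ℕ) (q ζ : ℂ) (r : ℕ) : Matrix (ZMod d) (ZMod d) ℂ :=
  Matrix.of fun j k => if j = k + (r : ZMod d) then q ^ (r * k.val) * ζ ^ (r ^ 2) else 0

/-- The total charge of the first `n` wires. -/
def Sc (d n : ℕ) (v : Fin (n + 2) → ZMod d) : ZMod d := ∑ i : Fin n, v (Fin.castAdd 2 i)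

section
variable {d : ℕ} [NeZero d]

lemma maxState_apply (m : ℕ) (v : Fin m → ZMod d) :
    MaxState d m v = (Real.sqrt d : ℂ) ^ (1 - (m : ℤ)) * qdlt d (∑ j, v j) := by
  simp only [MaxState, Pi.smul_apply, smul_eq_mul, Finset.sum_apply, ket, qdlt]
  congr 1
  rw [Finset.sum_ite_eq (Finset.univ.filter fun l : Fin m → ZMod d => ∑ j, l j = 0) v
    (fun _ => (1 : ℂ))]
  simp

lemma shift_iff {m : ℕ} (i j : Fin m) (hij : i ≠ j) (v w : Fin m → ZMod d) :
    v = Function.update w i (w i + w j) ↔ w = Function.update v i (v i - v j) := by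
  constructor
  · intro h; subst h; funext t
    by_cases ht : t = i
    · subst ht
      simp [Function.update_self, Function.update_of_ne hij.symm]
    · simp [Function.update_of_ne ht]
  · intro h; subst h; funext t
    by_cases ht : t = i
    · subst ht
      simp [Function.update_self, Function.update_of_ne hij.symm]
    · simp [Function.update_of_ne ht]

lemma onWire_mulVec (m : ℕ) (j : Fin m) (A : Matrix (ZMod d) (ZMod d) ℂ)
    (x : (Fin m → ZMod d) → ℂ) (v : Fin m → ZMod d) :
    (onWire d m j A).mulVec x v = ∑ a, A (v j) a * x (Function.update v j a) := by
  classical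
  have key : ∀ w : Fin m → ZMod d,
      (if Function.update v j 0 = Function.update w j 0 then A (v j) (w j) else 0) * x w
        = ∑ a, if w = Function.update v j a then A (v j) (w j) * x w else 0 := by
    intro w
    by_cases hC : Function.update v j 0 = Function.update w j 0
    · have hw : w = Function.update v j (w j) := by
        funext t
        by_cases ht : t = j
        · subst ht; simp
        · have := congrFun hC t
          simp only [Function.update_of_ne ht] at this
          simp [Function.update_of_ne ht, this.symm]
      have hiff : ∀ a : ZMod d, (w = Function.update v j a) ↔ a = w j := by
        intro a
        constructor
        · intro h; rw [h, Function.update_self]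
        · intro h; rw [h]; exact hw
      simp only [hiff]
      rw [Finset.sum_ite_eq' Finset.univ (w j) (fun _ => A (v j) (w j) * x w)]
      simp [hC]
    · have hno : ∀ a : ZMod d, ¬ (w = Function.update v j a) := by
        intro a h
        apply hC
        rw [h]
        simp [Function.update_idem]
      simp [hC, hno]
  simp only [Matrix.mulVec, dotProduct, onWire, Matrix.of_apply]
  rw [Finset.sum_congr rfl fun w _ => key w, Finset.sum_comm]
  refine Finset.sum_congr rfl fun a _ => ?_
  rw [Finset.sum_ite_eq' Finset.univ (Function.update v j a) (fun w => A (v j) (w j) * x w)]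
  simp

lemma phase1 {q ζ : ℂ} (hζ2 : ζ ^ 2 = q) (hqd : q ^ d = 1) (hζ0 : ζ ≠ 0) (k : ZMod d) :
    ζ ^ ((1 : ℤ) - 2 * (((k + 1 : ZMod d).val : ℤ))) * (q ^ k.val * ζ) = 1 := by
  have hdvd : (d : ℤ) ∣ ((k.val : ℤ) + 1 - ((k + 1 : ZMod d).val : ℤ)) := by
    have : ((((k.val : ℤ) + 1 - ((k + 1 : ZMod d).val : ℤ)) : ℤ) : ZMod d) = 0 := by
      push_cast
      simp [ZMod.natCast_val]
    exact (ZMod.intCast_zmod_eq_zero_iff_dvd _ d).mp this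
  obtain ⟨t, ht⟩ := hdvd
  have e1 : q ^ k.val * ζ = ζ ^ (2 * (k.val : ℤ) + 1) := by
    rw [zpow_add₀ hζ0, zpow_one, zpow_mul, zpow_two, ← pow_two, hζ2, zpow_natCast]
  rw [e1, ← zpow_add₀ hζ0]
  have : (1 : ℤ) - 2 * ((k + 1 : ZMod d).val : ℤ) + (2 * (k.val : ℤ) + 1)
      = 2 * ((k.val : ℤ) + 1 - ((k + 1 : ZMod d).val : ℤ)) := by ring
  rw [this, ht, zpow_mul, zpow_two, ← pow_two, hζ2, zpow_mul, zpow_natCast, hqd, one_zpow]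

lemma Ymat_inv {q ζ : ℂ} (hζ2 : ζ ^ 2 = q) (hqd : q ^ d = 1) (hζ0 : ζ ≠ 0) :
    (Ymat d ζ)⁻¹ = Zmat d q ζ 1 := by
  apply Matrix.inv_eq_right_inv
  ext j k
  simp only [Matrix.mul_apply, Ymat, Zmat, Matrix.of_apply, Nat.cast_one, one_mul, one_pow,
    pow_one, mul_ite, mul_zero]
  rw [Finset.sum_ite_eq' Finset.univ (k + 1)
    (fun m => (if j = m - 1 then ζ ^ (1 - 2 * (m.val : ℤ)) else 0) * (q ^ k.val * ζ))]
  simp only [Finset.mem_univ, if_true, add_sub_cancel_right, ite_mul, zero_mul]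
  rw [Matrix.one_apply]
  exact if_congr Iff.rfl (phase1 hζ2 hqd hζ0 k) rfl

lemma Z_succ {q ζ : ℂ} (hζ2 : ζ ^ 2 = q) (hqd : q ^ d = 1) (r : ℕ) :
    Zmat d q ζ r * Zmat d q ζ 1 = Zmat d q ζ (r + 1) := by
  ext j k
  simp only [Matrix.mul_apply, Zmat, Matrix.of_apply, Nat.cast_one, one_mul, one_pow, pow_one,
    mul_ite, mul_zero]
  rw [Finset.sum_ite_eq' Finset.univ (k + 1)
    (fun m => (if j = m + (r : ZMod d) then q ^ (r * m.val) * ζ ^ r ^ 2 else 0)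
      * (q ^ k.val * ζ))]
  simp only [Finset.mem_univ, if_true, ite_mul, zero_mul]
  have hcond : (k + 1 + (r : ZMod d)) = k + ((r + 1 : ℕ) : ZMod d) := by push_cast; ring
  rw [hcond]
  have e0 : q ^ ((k + 1 : ZMod d).val) = q ^ (k.val + 1) :=
    q_pow_eq_of_cast_eq q hqd (by push_cast; simp [ZMod.natCast_val])
  have e1 : q ^ (r * (k + 1 : ZMod d).val) = q ^ (r * (k.val + 1)) := by
    rw [mul_comm r, pow_mul, e0, ← pow_mul, mul_comm]
  exact if_congr Iff.rfl (by rw [e1, ← hζ2]; ring) rfl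

lemma Yinv_pow {q ζ : ℂ} (hζ2 : ζ ^ 2 = q) (hqd : q ^ d = 1) (hζ0 : ζ ≠ 0) (r : ℕ) :
    (Ymat d ζ)⁻¹ ^ r = Zmat d q ζ r := by
  induction r with
  | zero =>
    ext j k
    simp [Zmat, Matrix.one_apply]
  | succ r ih =>
    rw [pow_succ, ih, Ymat_inv hζ2 hqd hζ0, Z_succ hζ2 hqd]

lemma Sc_update_cast {n : ℕ} (v : Fin (n + 2) → ZMod d) (j : Fin n) (e : ZMod d) :
    Sc d n (Function.update v (Fin.castAdd 2 j) e) = Sc d n v - v (Fin.castAdd 2 j) + e := by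
  unfold Sc
  have h : ∀ i : Fin n, Function.update v (Fin.castAdd 2 j) e (Fin.castAdd 2 i)
      = Function.update (fun i : Fin n => v (Fin.castAdd 2 i)) j e i :=
    fun i => congrFun (Function.update_comp_eq_of_injective v (Fin.castAdd_injective n 2) j e) i
  rw [Finset.sum_congr rfl fun i _ => h i,
    Finset.sum_update_of_mem (Finset.mem_univ j),
    Finset.sdiff_singleton_eq_erase, Finset.sum_erase_eq_sub (Finset.mem_univ j)]
  abel

lemma Sc_update_cast' {n : ℕ} (v : Fin (n + 2) → ZMod d) (t : Fin (n + 2)) (j : Fin n)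
    (htj : t = Fin.castAdd 2 j) (e : ZMod d) :
    Sc d n (Function.update v t e) = Sc d n v - v t + e := by
  subst htj
  exact Sc_update_cast v j e

lemma Sc_update_high {n : ℕ} (v : Fin (n + 2) → ZMod d) (t : Fin (n + 2)) (ht : n ≤ t.1)
    (e : ZMod d) : Sc d n (Function.update v t e) = Sc d n v := by
  unfold Sc
  refine Finset.sum_congr rfl fun i _ => ?_
  apply Function.update_of_ne
  intro h
  have hv := congrArg Fin.val h
  have hlt := i.isLt
  simp only [Fin.coe_castAdd] at hv
  omega

end

/-- entanglement-distillation (fusion) protocol for the multipartite resource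
state.  Start from `|Max⟩ₙ ⊗ |Max⟩₂` on `n+2` qudits, apply `U₁`, then `F` on wire `n+1`,
then `U₃`; for every measurement outcome `ℓ`, pairing wire `n+1` against `e_ℓ` and applying
`Y^{-ℓ}` on the last wire yields exactly `ζ^{ℓ²} · d^{-1/2} · |Max⟩_{n+1}`. -/
theorem stmt_18 (d : ℕ) [NeZero d] (n : ℕ) (hn : 1 ≤ n) (q ζ : ℂ)
    (hq : q = Complex.exp (2 * Real.pi * Complex.I / d))
    (hζ2 : ζ ^ 2 = q) (hζd : ζ ^ d ^ 2 = 1) (l : ZMod d) :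
    (onWire d (n + 1) (Fin.last n) ((Ymat d ζ)⁻¹ ^ l.val)).mulVec
        (fun k : Fin (n + 1) → ZMod d =>
          (U3gate d n hn * onWire d (n + 2) ⟨n, by omega⟩ (Fmat d q)
              * U1gate d n hn).mulVec
            (fun v : Fin (n + 2) → ZMod d =>
              MaxState d n (fun i => v (Fin.castAdd 2 i)) *
                MaxState d 2 (fun i => v (Fin.natAdd n i)))
            ((⟨n, by omega⟩ : Fin (n + 2)).insertNth l k))
      = ζ ^ l.val ^ 2 • ((Real.sqrt d : ℂ)⁻¹ • MaxState d (n + 1)) := by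
  classical
  have hdn : d ≠ 0 := NeZero.ne d
  have hc : ((Real.sqrt d : ℝ) : ℂ) ≠ 0 := by
    simp only [ne_eq, Complex.ofReal_eq_zero]
    exact ne_of_gt (Real.sqrt_pos.mpr (by exact_mod_cast Nat.pos_of_ne_zero hdn))
  have hζ0 : ζ ≠ 0 := by
    intro h
    rw [h, zero_pow (by positivity)] at hζd
    exact zero_ne_one hζd
  have hdC : (d : ℂ) ≠ 0 := Nat.cast_ne_zero.mpr hdn
  have hqd : q ^ d = 1 := by
    rw [hq, ← Complex.exp_nat_mul,
      show (d : ℂ) * (2 * (Real.pi : ℂ) * Complex.I / d) = 2 * Real.pi * Complex.I by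
        field_simp]
    exact Complex.exp_two_pi_mul_I
  have hne01 : (⟨n - 1, by omega⟩ : Fin (n + 2)) ≠ ⟨n, by omega⟩ := by
    simp only [ne_eq, Fin.mk.injEq]; omega
  have hne10 : (⟨n, by omega⟩ : Fin (n + 2)) ≠ ⟨n - 1, by omega⟩ := fun h => hne01 h.symm
  have hne20 : (⟨n + 1, by omega⟩ : Fin (n + 2)) ≠ ⟨n - 1, by omega⟩ := by
    simp only [ne_eq, Fin.mk.injEq]; omega
  have hne21 : (⟨n + 1, by omega⟩ : Fin (n + 2)) ≠ ⟨n, by omega⟩ := by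
    simp only [ne_eq, Fin.mk.injEq]; omega
  have hU1 : ∀ (x : (Fin (n + 2) → ZMod d) → ℂ) (v : Fin (n + 2) → ZMod d),
      (U1gate d n hn).mulVec x v
        = x (Function.update v ⟨n - 1, by omega⟩ (v ⟨n - 1, by omega⟩ - v ⟨n, by omega⟩)) := by
    intro x v
    simp only [Matrix.mulVec, dotProduct, U1gate, Matrix.of_apply, ite_mul, one_mul,
      zero_mul]
    simp only [shift_iff (⟨n - 1, by omega⟩ : Fin (n + 2)) ⟨n, by omega⟩ hne01 v]
    rw [Finset.sum_ite_eq' Finset.univ _ x]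
    simp
  have hU3 : ∀ (x : (Fin (n + 2) → ZMod d) → ℂ) (v : Fin (n + 2) → ZMod d),
      (U3gate d n hn).mulVec x v
        = x (Function.update v ⟨n - 1, by omega⟩ (v ⟨n - 1, by omega⟩ + v ⟨n, by omega⟩)) := by
    intro x v
    simp only [Matrix.mulVec, dotProduct, U3gate, Matrix.of_apply, ite_mul, one_mul,
      zero_mul]
    have hcnd : ∀ w : Fin (n + 2) → ZMod d,
        (v = Function.update w ⟨n - 1, by omega⟩ (w ⟨n - 1, by omega⟩ - w ⟨n, by omega⟩))
          ↔ (w = Function.update v ⟨n - 1, by omega⟩ (v ⟨n - 1, by omega⟩ + v ⟨n, by omega⟩)) :=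
      fun w => (shift_iff (⟨n - 1, by omega⟩ : Fin (n + 2)) ⟨n, by omega⟩ hne01 w v).symm
    simp only [hcnd]
    rw [Finset.sum_ite_eq' Finset.univ _ x]
    simp
  have h1 : (U1gate d n hn).mulVec (fun v : Fin (n + 2) → ZMod d =>
        MaxState d n (fun i => v (Fin.castAdd 2 i)) * MaxState d 2 (fun i => v (Fin.natAdd n i)))
      = fun v : Fin (n + 2) → ZMod d =>
          ((Real.sqrt d : ℝ) : ℂ) ^ (-(n : ℤ)) *
            (qdlt d (Sc d n v - v ⟨n, by omega⟩) *
              qdlt d (v ⟨n, by omega⟩ + v ⟨n + 1, by omega⟩)) := by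
    funext v
    simp only [hU1]
    simp only [maxState_apply]
    have hs1 : (∑ j : Fin n, Function.update v ⟨n - 1, by omega⟩
          (v ⟨n - 1, by omega⟩ - v ⟨n, by omega⟩) (Fin.castAdd 2 j))
        = Sc d n v - v ⟨n, by omega⟩ := by
      rw [show (∑ j : Fin n, Function.update v (⟨n - 1, by omega⟩ : Fin (n + 2))
          (v ⟨n - 1, by omega⟩ - v ⟨n, by omega⟩) (Fin.castAdd 2 j))
          = Sc d n (Function.update v ⟨n - 1, by omega⟩
              (v ⟨n - 1, by omega⟩ - v ⟨n, by omega⟩)) from rfl]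
      rw [Sc_update_cast' v ⟨n - 1, by omega⟩ ⟨n - 1, by omega⟩ (by simp [Fin.ext_iff]) _]
      abel
    have hs2 : (∑ j : Fin 2, Function.update v ⟨n - 1, by omega⟩
          (v ⟨n - 1, by omega⟩ - v ⟨n, by omega⟩) (Fin.natAdd n j))
        = v ⟨n, by omega⟩ + v ⟨n + 1, by omega⟩ := by
      rw [Fin.sum_univ_two]
      have e1 : (Fin.natAdd n (0 : Fin 2)) = (⟨n, by omega⟩ : Fin (n + 2)) := by
        simp [Fin.ext_iff]
      have e2 : (Fin.natAdd n (1 : Fin 2)) = (⟨n + 1, by omega⟩ : Fin (n + 2)) := by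
        simp [Fin.ext_iff]
      rw [e1, e2, Function.update_of_ne hne10, Function.update_of_ne hne20]
    rw [hs1, hs2]
    have hcc : ((Real.sqrt d : ℝ) : ℂ) ^ ((1 : ℤ) - (n : ℤ))
        * ((Real.sqrt d : ℝ) : ℂ) ^ ((1 : ℤ) - ((2 : ℕ) : ℤ))
        = ((Real.sqrt d : ℝ) : ℂ) ^ (-(n : ℤ)) := by
      rw [← zpow_add₀ hc]
      congr 1
      push_cast
      ring
    rw [mul_mul_mul_comm, hcc]
  have h2 : (onWire d (n + 2) ⟨n, by omega⟩ (Fmat d q)).mulVec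
        (fun v : Fin (n + 2) → ZMod d =>
          ((Real.sqrt d : ℝ) : ℂ) ^ (-(n : ℤ)) *
            (qdlt d (Sc d n v - v ⟨n, by omega⟩) *
              qdlt d (v ⟨n, by omega⟩ + v ⟨n + 1, by omega⟩)))
      = fun v : Fin (n + 2) → ZMod d =>
          ((Real.sqrt d : ℝ) : ℂ) ^ (-(n : ℤ) - 1) *
            (q ^ ((-(v ⟨n + 1, by omega⟩)).val * (v ⟨n, by omega⟩).val) *
              qdlt d (Sc d n v + v ⟨n + 1, by omega⟩)) := by
    funext v
    rw [onWire_mulVec]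
    have key : ∀ a : ZMod d,
        Fmat d q (v ⟨n, by omega⟩) a *
          (((Real.sqrt d : ℝ) : ℂ) ^ (-(n : ℤ)) *
            (qdlt d (Sc d n (Function.update v ⟨n, by omega⟩ a)
                - Function.update v ⟨n, by omega⟩ a ⟨n, by omega⟩) *
              qdlt d (Function.update v ⟨n, by omega⟩ a ⟨n, by omega⟩
                + Function.update v ⟨n, by omega⟩ a ⟨n + 1, by omega⟩)))
        = if a = -(v ⟨n + 1, by omega⟩) then
            ((Real.sqrt d : ℝ) : ℂ) ^ (-(n : ℤ) - 1) *
              (q ^ (a.val * (v ⟨n, by omega⟩).val) * qdlt d (Sc d n v - a)) else 0 := by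
      intro a
      rw [Sc_update_high v _ (Nat.le_refl n) a]
      rw [Function.update_self, Function.update_of_ne hne21]
      rw [Fmat]
      simp only [Matrix.of_apply]
      rw [show qdlt d (a + v ⟨n + 1, by omega⟩)
          = if a = -(v ⟨n + 1, by omega⟩) then (1 : ℂ) else 0 from by
        unfold qdlt; exact if_congr add_eq_zero_iff_eq_neg rfl rfl]
      by_cases ha : a = -(v ⟨n + 1, by omega⟩)
      · rw [if_pos ha, if_pos ha, mul_one]
        rw [show ((Real.sqrt d : ℝ) : ℂ) ^ (-(n : ℤ) - 1)
            = ((Real.sqrt d : ℝ) : ℂ)⁻¹ * ((Real.sqrt d : ℝ) : ℂ) ^ (-(n : ℤ)) from by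
          rw [← zpow_neg_one, ← zpow_add₀ hc]; congr 1; ring]
        ring
      · rw [if_neg ha, if_neg ha, mul_zero, mul_zero, mul_zero]
    simp only [key]
    rw [Finset.sum_ite_eq' Finset.univ (-(v ⟨n + 1, by omega⟩))]
    simp only [Finset.mem_univ, if_true, sub_neg_eq_add]
  have h3 : (U3gate d n hn).mulVec (fun v : Fin (n + 2) → ZMod d =>
        ((Real.sqrt d : ℝ) : ℂ) ^ (-(n : ℤ) - 1) *
          (q ^ ((-(v ⟨n + 1, by omega⟩)).val * (v ⟨n, by omega⟩).val) *
            qdlt d (Sc d n v + v ⟨n + 1, by omega⟩)))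
      = fun v : Fin (n + 2) → ZMod d =>
          ((Real.sqrt d : ℝ) : ℂ) ^ (-(n : ℤ) - 1) *
            (q ^ ((-(v ⟨n + 1, by omega⟩)).val * (v ⟨n, by omega⟩).val) *
              qdlt d (Sc d n v + v ⟨n, by omega⟩ + v ⟨n + 1, by omega⟩)) := by
    funext v
    simp only [hU3]
    rw [Function.update_of_ne hne10, Function.update_of_ne hne20]
    have harg : Sc d n (Function.update v ⟨n - 1, by omega⟩
          (v ⟨n - 1, by omega⟩ + v ⟨n, by omega⟩)) + v ⟨n + 1, by omega⟩
        = Sc d n v + v ⟨n, by omega⟩ + v ⟨n + 1, by omega⟩ := by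
      rw [Sc_update_cast' v ⟨n - 1, by omega⟩ ⟨n - 1, by omega⟩ (by simp [Fin.ext_iff]) _]
      ring
    rw [harg]
  funext k0
  simp only [← Matrix.mulVec_mulVec]
  simp only [h1, h2, h3]
  rw [onWire_mulVec]
  rw [Yinv_pow hζ2 hqd hζ0 l.val]
  have hIa : ∀ k : Fin (n + 1) → ZMod d,
      ((⟨n, by omega⟩ : Fin (n + 2)).insertNth l k : Fin (n + 2) → ZMod d) ⟨n, by omega⟩ = l := by
    intro k
    exact Fin.insertNth_apply_same _ _ _
  have hIb : ∀ k : Fin (n + 1) → ZMod d,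
      ((⟨n, by omega⟩ : Fin (n + 2)).insertNth l k : Fin (n + 2) → ZMod d) ⟨n + 1, by omega⟩
        = k (Fin.last n) := by
    intro k
    have hsa : (⟨n + 1, by omega⟩ : Fin (n + 2))
        = (⟨n, by omega⟩ : Fin (n + 2)).succAbove (Fin.last n) := by
      rw [Fin.succAbove_of_le_castSucc]
      · simp [Fin.ext_iff]
      · simp [Fin.le_def]
    rw [hsa]
    exact Fin.insertNth_apply_succAbove _ _ _ _
  have hIc : ∀ (k : Fin (n + 1) → ZMod d) (i : Fin n),
      ((⟨n, by omega⟩ : Fin (n + 2)).insertNth l k : Fin (n + 2) → ZMod d) (Fin.castAdd 2 i)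
        = k i.castSucc := by
    intro k i
    have hsa : Fin.castAdd 2 i = (⟨n, by omega⟩ : Fin (n + 2)).succAbove i.castSucc := by
      rw [Fin.succAbove_of_castSucc_lt]
      · simp [Fin.ext_iff]
      · simp only [Fin.lt_def]
        simpa using i.isLt
    rw [hsa]
    exact Fin.insertNth_apply_succAbove _ _ _ _
  have hScI : ∀ k : Fin (n + 1) → ZMod d,
      Sc d n ((⟨n, by omega⟩ : Fin (n + 2)).insertNth l k : Fin (n + 2) → ZMod d)
        = ∑ i : Fin n, k i.castSucc :=
    fun k => Finset.sum_congr rfl fun i _ => hIc k i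
  have key2 : ∀ a : ZMod d,
      Zmat d q ζ l.val (k0 (Fin.last n)) a *
        (((Real.sqrt d : ℝ) : ℂ) ^ (-(n : ℤ) - 1) *
          (q ^ ((-(((⟨n, by omega⟩ : Fin (n + 2)).insertNth l (Function.update k0 (Fin.last n) a) : Fin (n + 2) → ZMod d) ⟨n + 1, by omega⟩)).val * (((⟨n, by omega⟩ : Fin (n + 2)).insertNth l (Function.update k0 (Fin.last n) a) : Fin (n + 2) → ZMod d) ⟨n, by omega⟩).val) *
            qdlt d (Sc d n ((⟨n, by omega⟩ : Fin (n + 2)).insertNth l (Function.update k0 (Fin.last n) a) : Fin (n + 2) → ZMod d) + ((⟨n, by omega⟩ : Fin (n + 2)).insertNth l (Function.update k0 (Fin.last n) a) : Fin (n + 2) → ZMod d) ⟨n, by omega⟩ + ((⟨n, by omega⟩ : Fin (n + 2)).insertNth l (Function.update k0 (Fin.last n) a) : Fin (n + 2) → ZMod d) ⟨n + 1, by omega⟩)))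
      = if a = k0 (Fin.last n) - l then
          (q ^ (l.val * a.val) * ζ ^ l.val ^ 2) *
            (((Real.sqrt d : ℝ) : ℂ) ^ (-(n : ℤ) - 1) *
              (q ^ ((-a).val * l.val) *
                qdlt d ((∑ i : Fin n, k0 i.castSucc) + l + a))) else 0 := by
    intro a
    have hupd' : ∀ i : Fin n, Function.update k0 (Fin.last n) a i.castSucc = k0 i.castSucc :=
      fun i => Function.update_of_ne (Fin.castSucc_lt_last i).ne _ _
    simp only [hIa, hIb, hScI, Function.update_self, hupd']
    simp only [Zmat, Matrix.of_apply]
    rw [show ((l.val : ℕ) : ZMod d) = l from by simp]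
    simp only [ite_mul, zero_mul]
    refine if_congr ?_ rfl rfl
    constructor
    · intro h
      rw [h]
      ring
    · intro h
      rw [h]
      ring
  simp only [key2]
  rw [Finset.sum_ite_eq' Finset.univ (k0 (Fin.last n) - l)]
  simp only [Finset.mem_univ, if_true]
  have hph : q ^ (l.val * (k0 (Fin.last n) - l).val)
      * q ^ ((-(k0 (Fin.last n) - l)).val * l.val) = 1 := by
    rw [← pow_add,
      q_pow_eq_of_cast_eq q hqd (b := 0) (by push_cast; simp [ZMod.natCast_val]; ring),
      pow_zero]
  have harg : (∑ i : Fin n, k0 i.castSucc) + l + (k0 (Fin.last n) - l) = ∑ j, k0 j := by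
    rw [Fin.sum_univ_castSucc]
    ring
  rw [harg]
  simp only [Pi.smul_apply, smul_eq_mul]
  rw [maxState_apply]
  have hc2 : ((Real.sqrt d : ℝ) : ℂ) ^ (-(n : ℤ) - 1)
      = ((Real.sqrt d : ℝ) : ℂ)⁻¹ * ((Real.sqrt d : ℝ) : ℂ) ^ ((1 : ℤ) - (((n : ℕ) + 1 : ℕ) : ℤ)) := by
    rw [← zpow_neg_one, ← zpow_add₀ hc]
    congr 1
    push_cast
    ring
  rw [hc2]
  calc (q ^ (l.val * (k0 (Fin.last n) - l).val) * ζ ^ l.val ^ 2) *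
        ((((Real.sqrt d : ℝ) : ℂ)⁻¹
            * ((Real.sqrt d : ℝ) : ℂ) ^ ((1 : ℤ) - (((n : ℕ) + 1 : ℕ) : ℤ))) *
          (q ^ ((-(k0 (Fin.last n) - l)).val * l.val) * qdlt d (∑ j, k0 j)))
      = (q ^ (l.val * (k0 (Fin.last n) - l).val) * q ^ ((-(k0 (Fin.last n) - l)).val * l.val)) *
          (ζ ^ l.val ^ 2 * (((Real.sqrt d : ℝ) : ℂ)⁻¹
            * (((Real.sqrt d : ℝ) : ℂ) ^ ((1 : ℤ) - (((n : ℕ) + 1 : ℕ) : ℤ))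
              * qdlt d (∑ j, k0 j)))) := by ring
    _ = ζ ^ l.val ^ 2 * (((Real.sqrt d : ℝ) : ℂ)⁻¹
            * (((Real.sqrt d : ℝ) : ℂ) ^ ((1 : ℤ) - (((n : ℕ) + 1 : ℕ) : ℤ))
              * qdlt d (∑ j, k0 j))) := by rw [hph, one_mul]
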